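/- Let φ be an injective endomorphism of the free group F_n, let W be an attracting fixed word of φ, and let U ∈ fix(φ). Then the infinite reduced word UW (obtained by left multiplying W by U and freely reducing) is also an attracting fixed word of φ. -/

import Mathlib

open Filter

namespace ZZFix

/-- A letter: a basis element together with a sign. -/
abbrev Letter (α : Type*) := α × Bool

/-- The inverse letter. -/
def linv {α : Type*} (l : Letter α) : Letter α := (l.1, !l.2)

/-- An infinite reduced word: a sequence of letters with no adjacent cancellation. -/
def InfWord (α : Type*) : Type _ := {w : ℕ → Letter α // ∀ i, w (i + 1) ≠ linv (w i)}

/-- The length-`i` prefix of an infinite reduced word, as a list of letters. -/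
def prefixList {α : Type*} (W : InfWord α) (i : ℕ) : List (Letter α) :=
  (List.range i).map W.1

/-- The length-`i` prefix of an infinite reduced word, as an element of the free group. -/
def wordPrefix {α : Type*} (W : InfWord α) (i : ℕ) : FreeGroup α :=
  FreeGroup.mk (prefixList W i)

/-- Length of the longest common prefix of two lists. -/
def commonPrefixLength {β : Type*} [DecidableEq β] : List β → List β → ℕ
  | a :: as, b :: bs => if a = b then commonPrefixLength as bs + 1 else 0
  | _, _ => 0

variable {α : Type*} [DecidableEq α]

/-- `|W ∧ g|` for an infinite reduced word `W` and a finite reduced word `g`. -/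
def wedgeF (W : InfWord α) (g : FreeGroup α) : ℕ :=
  commonPrefixLength (prefixList W (FreeGroup.toWord g).length) (FreeGroup.toWord g)

/-- `|g ∧ h|` for finite reduced words. -/
def wedgeFF (g h : FreeGroup α) : ℕ :=
  commonPrefixLength (FreeGroup.toWord g) (FreeGroup.toWord h)

/-- `|W ∧ V|` for infinite reduced words, valued in `ℕ∞` (it is `⊤` iff `W = V`). -/
noncomputable def wedgeI {α : Type*} (W V : InfWord α) : ℕ∞ :=
  sSup ((fun i : ℕ => (i : ℕ∞)) '' {i : ℕ | prefixList W i = prefixList V i})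

/-- A sequence of group elements converges to the infinite reduced word `W`
(in the initial segment metric on `F ⊔ ∂F`). -/
def ConvergesTo (u : ℕ → FreeGroup α) (W : InfWord α) : Prop :=
  Tendsto (fun i => wedgeF W (u i)) atTop atTop

/-- `W` is a fixed infinite word of `φ`: `|W ∧ φ(W_i)| → ∞`. -/
def IsFixedInfWord (φ : FreeGroup α →* FreeGroup α) (W : InfWord α) : Prop :=
  Tendsto (fun i => wedgeF W (φ (wordPrefix W i))) atTop atTop

/-- `W` is an attracting fixed word of `φ`: it is fixed and `|W ∧ φ(W_i)| - i → +∞`. -/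
def IsAttractingFixedWord (φ : FreeGroup α →* FreeGroup α) (W : InfWord α) : Prop :=
  IsFixedInfWord φ W ∧
    Tendsto (fun i => (wedgeF W (φ (wordPrefix W i)) : ℤ) - (i : ℤ)) atTop atTop

/-- The fixed subgroup of an endomorphism. -/
def fixedSubgroup {G : Type*} [Group G] (φ : G →* G) : Subgroup G where
  carrier := {g | φ g = g}
  one_mem' := map_one φ
  mul_mem' := by
    intro a b ha hb
    simp only [Set.mem_setOf_eq] at *
    rw [map_mul, ha, hb]
  inv_mem' := by
    intro a ha
    simp only [Set.mem_setOf_eq] at *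
    rw [map_inv, ha]

/-- The rank (minimal number of generators) of a subgroup, valued in `ℕ∞`. -/
noncomputable def grpRank {G : Type*} [Group G] (H : Subgroup G) : ℕ∞ :=
  sInf {k : ℕ∞ | ∃ S : Finset G, Subgroup.closure (S : Set G) = H ∧ (S.card : ℕ∞) = k}

/-- Two infinite reduced words are equivalent (w.r.t. `φ`) if `W' = U·W` for some
`U ∈ fix(φ)`, i.e. the reduced products `U·W_i` converge to `W'`. -/
def EquivFixedWords (φ : FreeGroup α →* FreeGroup α) (W W' : InfWord α) : Prop :=
  ∃ U ∈ fixedSubgroup φ, ConvergesTo (fun i => U * wordPrefix W i) W'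

/-- `a(φ)`: the number of equivalence classes of attracting fixed words, in `ℕ∞`. -/
noncomputable def aCard (φ : FreeGroup α →* FreeGroup α) : ℕ∞ :=
  ENat.card (Quot fun (W W' : {W : InfWord α // IsAttractingFixedWord φ W}) =>
    EquivFixedWords φ W.1 W'.1)

/-- The inner automorphism `i_c : g ↦ c g c⁻¹`, as a monoid homomorphism. -/
def innerAut {G : Type*} [Group G] (c : G) : G →* G := (MulAut.conj c).toMonoidHom

/-- Two endomorphisms are similar if `ψ₂ = i_c ∘ ψ₁ ∘ i_c⁻¹` for some `c`. -/
def Similar {G : Type*} [Group G] (ψ₁ ψ₂ : G →* G) : Prop :=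
  ∃ c : G, ψ₂ = ((innerAut c).comp ψ₁).comp (innerAut c⁻¹)

/-- The trace of the endomorphism of `ℤⁿ` induced by `φ` on the abelianization. -/
def abTrace {n : ℕ} (φ : FreeGroup (Fin n) →* FreeGroup (Fin n)) : ℤ :=
  ∑ i : Fin n, Multiplicative.toAdd
    ((FreeGroup.lift fun k => Multiplicative.ofAdd (if k = i then (1 : ℤ) else 0))
      (φ (FreeGroup.of i)))

/-- The constant infinite reduced word `l l l ⋯`. -/
def constWord {α : Type*} (l : Letter α) : InfWord α :=
  ⟨fun _ => l, fun _ h => by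
    have h2 := congrArg Prod.snd h
    simp [linv] at h2⟩

/-- `W` is an attracting fixed point of `φ`: it is fixed, and there is `i₀` such that
every finite or infinite reduced word `V` with `|W ∧ V| ≥ i₀` satisfies
`|W ∧ φᵖ(V)| → ∞` as `p → ∞`. -/
def IsAttractingFixedPoint (φ : FreeGroup α →* FreeGroup α) (W : InfWord α) : Prop :=
  IsFixedInfWord φ W ∧
    ∃ i₀ : ℕ,
      (∀ g : FreeGroup α, i₀ ≤ wedgeF W g →
        Tendsto (fun p => wedgeF W ((⇑φ)^[p] g)) atTop atTop) ∧
      (∀ V : InfWord α, (i₀ : ℕ∞) ≤ wedgeI W V →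
        ∀ Vs : ℕ → InfWord α, Vs 0 = V →
          (∀ p, ConvergesTo (fun i => φ (wordPrefix (Vs p) i)) (Vs (p + 1))) →
          Tendsto (fun p => wedgeI W (Vs p)) atTop atTop)

open scoped Classical in
/-- The initial segment metric. -/
noncomputable def distIS {α : Type*} (W V : InfWord α) : ℝ :=
  if W = V then 0 else 1 / (1 + ((wedgeI W V).toNat : ℝ))

end ZZFix

/-!
Write `N = |U| + 1` and `k = |U·W_N|`. Since `U` is shorter than `W_N`, all cancellation in
`U·g`, for a word `g` beginning with `W_N`, happens inside `W_N`: the reduced word of `U·g` is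
that of `U·W_N` followed by the rest of `g`. Hence `W'_{k+t} = U·W_{N+t}`, and a common prefix
of length `m ≥ N` of `W` and `g` gives one of length `k + (m - N)` of `W'` and `U·g`. As
`φ(U) = U`, this yields `|W' ∧ φ(W'_{k+t})| - (k + t) ≥ |W ∧ φ(W_{N+t})| - (N + t)`.
-/

namespace FreeGroup

variable {α : Type*} [DecidableEq α]

theorem exists_reduce_append {A B : List (α × Bool)} (hA : IsReduced A) (hB : IsReduced B) :
    ∃ A₁ C B₁, A = A₁ ++ C ∧ B = invRev C ++ B₁ ∧ reduce (A ++ B) = A₁ ++ B₁ := by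
  induction A using List.reverseRecOn generalizing B with
  | nil => exact ⟨[], [], B, rfl, by simp [invRev], hB.reduce_eq⟩
  | append_singleton A a ih =>
    obtain ⟨x, s⟩ := a
    rcases B with _ | ⟨b, B⟩
    · exact ⟨A ++ [(x, s)], [], [], by simp, by simp [invRev], by simpa using hA.reduce_eq⟩
    by_cases hb : b = (x, !s)
    · subst hb
      obtain ⟨A₁, C, B₁, rfl, rfl, h⟩ :=
        ih (hA.infix (List.prefix_append _ _).isInfix) (hB.infix (List.suffix_cons _ _).isInfix)
      refine ⟨A₁, C ++ [(x, s)], B₁, by simp, by simp [invRev], ?_⟩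
      rw [← h, List.append_assoc, List.append_assoc, List.singleton_append,
        ← List.append_assoc]
      exact reduce.Step.eq Red.Step.not
    · have hxb : IsReduced ([(x, s)] ++ b :: B) := by
        refine isReduced_cons_cons.2 ⟨fun hx => ?_, hB⟩
        obtain ⟨y, r⟩ := b
        simp only at hx
        subst hx
        cases s <;> cases r <;> simp_all
      exact ⟨A ++ [(x, s)], [], b :: B, by simp, by simp [invRev],
        (hA.append_overlap hxb (List.cons_ne_nil _ _)).reduce_eq⟩

theorem exists_toWord_mul (x y : FreeGroup α) :
    ∃ A C B, x.toWord = A ++ C ∧ y.toWord = invRev C ++ B ∧ (x * y).toWord = A ++ B := by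
  rw [toWord_mul]
  exact exists_reduce_append isReduced_toWord isReduced_toWord

theorem toWord_mul_mk_append {x : FreeGroup α} {P R : List (α × Bool)}
    (hPR : IsReduced (P ++ R)) (hx : x.toWord.length < P.length) :
    (x * mk (P ++ R)).toWord = (x * mk P).toWord ++ R := by
  have hP : IsReduced P := hPR.infix (List.prefix_append _ _).isInfix
  obtain ⟨A, C, B, hxw, hPw, hxP⟩ := exists_toWord_mul x (mk P)
  rw [toWord_mk, hP.reduce_eq] at hPw
  have hB : B ≠ [] := by
    rintro rfl
    have hC := congrArg List.length hxw
    rw [hPw, List.append_nil, invRev_length] at hx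
    simp only [List.length_append] at hC
    omega
  have hBR : IsReduced (B ++ R) := hPR.infix ⟨invRev C, [], by simp [hPw]⟩
  have hAB : IsReduced (A ++ B) := hxP ▸ isReduced_toWord
  have hR : IsReduced R := hPR.infix (List.suffix_append _ _).isInfix
  rw [← mul_mk, ← mul_assoc, toWord_mul, hxP, toWord_mk, hR.reduce_eq,
    (hAB.append_overlap hBR hB).reduce_eq]

end FreeGroup

namespace ZZFix

theorem le_commonPrefixLength_iff {β : Type*} [DecidableEq β] {L M : List β} {m : ℕ} :
    m ≤ commonPrefixLength L M ↔ m ≤ L.length ∧ m ≤ M.length ∧ L.take m = M.take m := by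
  induction L generalizing M m with
  | nil => simp [commonPrefixLength]; omega
  | cons a L ih =>
    cases M with
    | nil => simp [commonPrefixLength]; omega
    | cons b M =>
      cases m with
      | zero => simp
      | succ m => by_cases hab : a = b <;> simp [commonPrefixLength, hab, ih]

section Prefixes

variable {β : Type*} (W : InfWord β)

theorem length_prefixList (i : ℕ) : (prefixList W i).length = i := by
  simp [prefixList]

theorem take_prefixList {m i : ℕ} (h : m ≤ i) : (prefixList W i).take m = prefixList W m := by
  rw [prefixList, prefixList, ← List.map_take, List.take_range, min_eq_left h]

theorem prefixList_prefix {m i : ℕ} (h : m ≤ i) : prefixList W m <+: prefixList W i :=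
  take_prefixList W h ▸ List.take_prefix _ _

theorem isReduced_prefixList (i : ℕ) : FreeGroup.IsReduced (prefixList W i) := by
  rw [FreeGroup.IsReduced, prefixList, List.isChain_map]
  rcases i with _ | i
  · simp
  · refine (List.isChain_range_succ _ _).2 fun m _ hm => ?_
    by_contra hs
    exact W.2 m (Prod.ext hm.symm (Bool.eq_not.2 (Ne.symm hs)))

end Prefixes

variable {α : Type*} [DecidableEq α]

theorem toWord_wordPrefix (W : InfWord α) (i : ℕ) : (wordPrefix W i).toWord = prefixList W i := by
  rw [wordPrefix, FreeGroup.toWord_mk, (isReduced_prefixList W i).reduce_eq]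

theorem le_wedgeF_iff {W : InfWord α} {g : FreeGroup α} {m : ℕ} :
    m ≤ wedgeF W g ↔ prefixList W m <+: g.toWord := by
  rw [wedgeF, le_commonPrefixLength_iff, length_prefixList, List.prefix_iff_eq_take,
    length_prefixList]
  constructor
  · rintro ⟨hm, -, h⟩
    rwa [take_prefixList W hm] at h
  · intro h
    have hm : m ≤ g.toWord.length := by simpa [length_prefixList] using congrArg List.length h
    exact ⟨hm, hm, by rw [take_prefixList W hm, h]⟩

theorem le_wedgeF_wordPrefix (W : InfWord α) {m i : ℕ} (h : m ≤ i) :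
    m ≤ wedgeF W (wordPrefix W i) := by
  rw [le_wedgeF_iff, toWord_wordPrefix]
  exact prefixList_prefix W h

theorem prefixList_eq_of_convergesTo {u : ℕ → FreeGroup α} {W : InfWord α}
    (hu : ConvergesTo u W) {L : List (α × Bool)} (hL : ∀ᶠ i in atTop, L <+: (u i).toWord) :
    prefixList W L.length = L := by
  obtain ⟨i, hi, hLi⟩ := ((hu.eventually_ge_atTop L.length).and hL).exists
  have hWi := le_wedgeF_iff.1 hi
  exact (List.prefix_of_prefix_length_le hWi hLi (by rw [length_prefixList])).eq_of_length
    (length_prefixList W _)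

theorem toWord_mul_of_le_wedgeF {W : InfWord α} {x g : FreeGroup α} {N : ℕ}
    (hx : x.toWord.length < N) (hg : N ≤ wedgeF W g) :
    (x * g).toWord = (x * wordPrefix W N).toWord ++ g.toWord.drop N := by
  obtain ⟨R, hR⟩ := le_wedgeF_iff.1 hg
  have hRd : R = g.toWord.drop N := by rw [← hR, List.drop_left' (length_prefixList W N)]
  rw [← hRd, ← FreeGroup.mk_toWord (x := g), ← hR, wordPrefix]
  exact FreeGroup.toWord_mul_mk_append (hR ▸ FreeGroup.isReduced_toWord)
    (by rwa [length_prefixList])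

section LeftTranslate

variable {x : FreeGroup α} {W W' : InfWord α} {N : ℕ}

theorem toWord_mul_wordPrefix (hx : x.toWord.length < N) {i : ℕ} (hi : N ≤ i) :
    (x * wordPrefix W i).toWord = (x * wordPrefix W N).toWord ++ (prefixList W i).drop N := by
  rw [toWord_mul_of_le_wedgeF hx (le_wedgeF_wordPrefix W hi), toWord_wordPrefix]

theorem wordPrefix_of_convergesTo_mul (hx : x.toWord.length < N)
    (hW' : ConvergesTo (fun i => x * wordPrefix W i) W') (t : ℕ) :
    wordPrefix W' ((x * wordPrefix W N).toWord.length + t) = x * wordPrefix W (N + t) := by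
  have hL := toWord_mul_wordPrefix (W := W) hx (Nat.le_add_right N t)
  have hlen : (x * wordPrefix W (N + t)).toWord.length
      = (x * wordPrefix W N).toWord.length + t := by
    simp [hL, length_prefixList]
  have hpre : prefixList W' (x * wordPrefix W (N + t)).toWord.length
      = (x * wordPrefix W (N + t)).toWord := by
    refine prefixList_eq_of_convergesTo hW' ?_
    filter_upwards [eventually_ge_atTop (N + t)] with i hi
    rw [hL, toWord_mul_wordPrefix hx (le_trans (Nat.le_add_right N t) hi),
      List.prefix_append_right_inj]
    exact (prefixList_prefix W hi).drop N
  rw [← hlen, wordPrefix, hpre, FreeGroup.mk_toWord]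

theorem le_wedgeF_mul (hx : x.toWord.length < N)
    (hW' : ConvergesTo (fun i => x * wordPrefix W i) W') {g : FreeGroup α}
    (hg : N ≤ wedgeF W g) :
    (x * wordPrefix W N).toWord.length + (wedgeF W g - N) ≤ wedgeF W' (x * g) := by
  rw [le_wedgeF_iff, ← toWord_wordPrefix, wordPrefix_of_convergesTo_mul hx hW',
    Nat.add_sub_cancel' hg, toWord_mul_wordPrefix hx hg, toWord_mul_of_le_wedgeF hx hg,
    List.prefix_append_right_inj]
  exact (le_wedgeF_iff.1 le_rfl).drop N

end LeftTranslate

theorem isAttractingFixedWord_of_tendsto {φ : FreeGroup α →* FreeGroup α} {W : InfWord α}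
    (h : Tendsto (fun i => (wedgeF W (φ (wordPrefix W i)) : ℤ) - (i : ℤ)) atTop atTop) :
    IsAttractingFixedWord φ W :=
  ⟨tendsto_natCast_atTop_iff.1 (tendsto_atTop_mono (fun i => by simp) h), h⟩

theorem stmt8_general {n : ℕ} (φ : FreeGroup (Fin n) →* FreeGroup (Fin n))
    (W W' : InfWord (Fin n)) (U : FreeGroup (Fin n))
    (hW : IsAttractingFixedWord φ W) (hU : U ∈ fixedSubgroup φ)
    (hW' : ConvergesTo (fun i => U * wordPrefix W i) W') :
    IsAttractingFixedWord φ W' := by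
  have hφU : φ U = U := hU
  set N := U.toWord.length + 1
  set k := (U * wordPrefix W N).toWord.length
  have hN : U.toWord.length < N := Nat.lt_succ_self _
  have hshift : Tendsto (fun j => N + (j - k)) atTop atTop :=
    tendsto_atTop_mono (fun j => Nat.le_add_left _ _) (tendsto_sub_atTop_nat k)
  refine isAttractingFixedWord_of_tendsto (tendsto_atTop_mono' _ ?_ (hW.2.comp hshift))
  filter_upwards [eventually_ge_atTop k, (hW.1.comp hshift).eventually_ge_atTop N]
    with j hj hwedge
  obtain ⟨t, rfl⟩ := Nat.exists_eq_add_of_le hj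
  simp only [Function.comp_apply, Nat.add_sub_cancel_left] at hwedge ⊢
  have hφ : φ (wordPrefix W' (k + t)) = U * φ (wordPrefix W (N + t)) := by
    rw [wordPrefix_of_convergesTo_mul hN hW', map_mul, hφU]
  have hbound := le_wedgeF_mul hN hW' hwedge
  rw [← hφ] at hbound
  push_cast
  omega

/-- any word equivalent to an attracting fixed word of `φ` is again an
attracting fixed word of `φ`. -/
theorem stmt8 {n : ℕ} (φ : FreeGroup (Fin n) →* FreeGroup (Fin n))
    (hφ : Function.Injective φ) (W W' : InfWord (Fin n)) (U : FreeGroup (Fin n))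
    (hW : IsAttractingFixedWord φ W) (hU : U ∈ fixedSubgroup φ)
    (hW' : ConvergesTo (fun i => U * wordPrefix W i) W') :
    IsAttractingFixedWord φ W' :=
  stmt8_general φ W W' U hW hU hW'

end ZZFix
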